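/- Let (V_i)_{i∈ℤ} be a family of finite-dimensional complex inner product spaces together with linear maps d_i : V_i → V_{i+1} satisfying d_{i+1} ∘ d_i = 0 for all i ∈ ℤ, and let Δ_i = d_{i-1} ∘ (d_{i-1})* + (d_i)* ∘ d_i, where * denotes the adjoint with respect to the inner products. Then for every i ∈ ℤ, V_i is the internal orthogonal direct sum of range(d_{i-1}), range((d_i)*) and ker(Δ_i). -/

import Mathlib

/-!
Writing `A = d_{i-1}` and `B = d_i`, we have `⟪Δ v, v⟫ = ‖A* v‖² + ‖B v‖²`, so
`ker Δ = ker A* ⊓ ker B = (range A ⊔ range B*)ᗮ`, while `B ∘ A = 0` gives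
`range A ≤ ker B = (range B*)ᗮ`. The decomposition is then the orthogonal splitting
`V = (range A ⊔ range B*) ⊕ (range A ⊔ range B*)ᗮ`.
-/

open scoped ComplexInnerProductSpace

/-- The `i`-th Laplace operator of a cochain complex of finite-dimensional complex
inner product spaces, acting on `V (i+1)`:
`Δ_{i+1} = d_i ∘ (d_i)* + (d_{i+1})* ∘ d_{i+1}`. -/
noncomputable def LapFin (V : ℤ → Type*) [∀ i, NormedAddCommGroup (V i)]
    [∀ i, InnerProductSpace ℂ (V i)] [∀ i, FiniteDimensional ℂ (V i)]
    (d : ∀ i, V i →ₗ[ℂ] V (i + 1)) (i : ℤ) : V (i + 1) →ₗ[ℂ] V (i + 1) :=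
  (d i).comp (LinearMap.adjoint (d i)) +
    (LinearMap.adjoint (d (i + 1))).comp (d (i + 1))

namespace LinearMap

variable {𝕜 E F G : Type*} [RCLike 𝕜] [NormedAddCommGroup E] [InnerProductSpace 𝕜 E]
  [NormedAddCommGroup F] [InnerProductSpace 𝕜 F] [FiniteDimensional 𝕜 F]
  [NormedAddCommGroup G] [InnerProductSpace 𝕜 G] [FiniteDimensional 𝕜 G]

theorem range_le_orthogonal_range_adjoint {A : E →ₗ[𝕜] F} {B : F →ₗ[𝕜] G}
    (h : B ∘ₗ A = 0) : range A ≤ (range B.adjoint)ᗮ := by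
  rw [orthogonal_range, adjoint_adjoint]
  exact range_le_ker_iff.mpr h

variable [FiniteDimensional 𝕜 E]

theorem ker_adjoint_comp_self_add_adjoint_comp_self (S : E →ₗ[𝕜] F) (T : E →ₗ[𝕜] G) :
    ker (S.adjoint ∘ₗ S + T.adjoint ∘ₗ T) = ker S ⊓ ker T := by
  ext v
  simp only [Submodule.mem_inf, mem_ker, add_apply, comp_apply]
  refine ⟨fun h => ?_, fun ⟨hS, hT⟩ => by simp [hS, hT]⟩
  have hnorm : ‖S v‖ ^ 2 + ‖T v‖ ^ 2 = 0 := by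
    have := congrArg (fun w => RCLike.re (inner 𝕜 w v)) h
    simpa only [inner_add_left, map_add, adjoint_inner_left, inner_self_eq_norm_sq,
      inner_zero_left, map_zero] using this
  simpa only [sq_eq_zero_iff, norm_eq_zero] using
    (add_eq_zero_iff_of_nonneg (sq_nonneg _) (sq_nonneg _)).mp hnorm

theorem ker_comp_adjoint_add_adjoint_comp (A : E →ₗ[𝕜] F) (B : F →ₗ[𝕜] G) :
    ker (A ∘ₗ A.adjoint + B.adjoint ∘ₗ B) = (range A ⊔ range B.adjoint)ᗮ := by
  rw [← Submodule.inf_orthogonal, orthogonal_range, orthogonal_range, adjoint_adjoint]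
  simpa only [adjoint_adjoint] using ker_adjoint_comp_self_add_adjoint_comp_self A.adjoint B

end LinearMap

open LinearMap Submodule in
/-- For a cochain complex of finite-dimensional complex inner product spaces, each
`V i` is the internal orthogonal direct sum of `range d_{i-1}`, `range (d_i)*` and
`ker Δ_i`. -/
theorem stmt4 (V : ℤ → Type*) [∀ i, NormedAddCommGroup (V i)]
    [∀ i, InnerProductSpace ℂ (V i)] [∀ i, FiniteDimensional ℂ (V i)]
    (d : ∀ i, V i →ₗ[ℂ] V (i + 1))
    (hd : ∀ i, (d (i + 1)).comp (d i) = 0) :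
    ∀ i : ℤ,
      (∀ x ∈ LinearMap.range (d i),
        ∀ y ∈ LinearMap.range (LinearMap.adjoint (d (i + 1))), ⟪x, y⟫ = 0) ∧
      (∀ x ∈ LinearMap.range (d i), ∀ z ∈ LinearMap.ker (LapFin V d i), ⟪x, z⟫ = 0) ∧
      (∀ y ∈ LinearMap.range (LinearMap.adjoint (d (i + 1))),
        ∀ z ∈ LinearMap.ker (LapFin V d i), ⟪y, z⟫ = 0) ∧
      (∀ u : V (i + 1),
        ∃ x ∈ LinearMap.range (d i),
          ∃ y ∈ LinearMap.range (LinearMap.adjoint (d (i + 1))),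
            ∃ z ∈ LinearMap.ker (LapFin V d i), u = x + y + z) := by
  intro i
  have hker : ker (LapFin V d i) = (range (d i) ⊔ range (d (i + 1)).adjoint)ᗮ :=
    ker_comp_adjoint_add_adjoint_comp (d i) (d (i + 1))
  refine ⟨fun x hx y hy => inner_left_of_mem_orthogonal hy
      (range_le_orthogonal_range_adjoint (hd i) hx),
    fun x hx z hz => ?_, fun y hy z hz => ?_, fun u => ?_⟩
  · rw [hker] at hz
    exact inner_right_of_mem_orthogonal hx (orthogonal_le le_sup_left hz)
  · rw [hker] at hz
    exact inner_right_of_mem_orthogonal hy (orthogonal_le le_sup_right hz)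
  · obtain ⟨w, hw, z, hz, rfl⟩ :=
      (range (d i) ⊔ range (d (i + 1)).adjoint).exists_add_mem_mem_orthogonal u
    obtain ⟨x, hx, y, hy, rfl⟩ := mem_sup.mp hw
    exact ⟨x, hx, y, hy, z, hker ▸ hz, rfl⟩
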